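/- Let m and n be integers with 2 ≤ 2m < n+1. There exists a constant C(n,m) > 0 depending only on n and m such that for every f ∈ L¹(ℝ^n) and every λ > 0, the Lebesgue measure of the set {(x,t) ∈ ℝ^{n+1}_+ : |(N_m * f)(x,t)| > λ} is at most C(n,m) λ^{−(n+1)/(n−2m+1)} ‖f‖_{L¹(ℝ^n)}^{(n+1)/(n−2m+1)}; that is, N_m * f belongs to weak-L^{(n+1)/(n−2m+1)}(ℝ^{n+1}_+). -/

import Mathlib

open MeasureTheory Filter Asymptotics
open scoped Topology ENNReal

noncomputable section

/-- Points of `ℝ^{n+1}` are written `X = (x, t)` with `x ∈ ℝ^n` and `t ∈ ℝ`. -/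
abbrev Pt (n : ℕ) := (EuclideanSpace ℝ (Fin n)) × ℝ

/-- The Laplacian on `ℝ^{n+1} = ℝ^n × ℝ`, computed as the sum of the second partial
derivatives in the coordinate directions. -/
def lap (n : ℕ) (f : Pt n → ℝ) : Pt n → ℝ := fun X =>
  (∑ i : Fin n,
      fderiv ℝ (fun Y => fderiv ℝ f Y ((EuclideanSpace.single i (1:ℝ)), (0:ℝ))) X
        ((EuclideanSpace.single i (1:ℝ)), (0:ℝ)))
    + fderiv ℝ (fun Y => fderiv ℝ f Y ((0 : EuclideanSpace ℝ (Fin n)), (1:ℝ))) X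
        ((0 : EuclideanSpace ℝ (Fin n)), (1:ℝ))

/-- `lapIter n m f = Δ^m f`. -/
def lapIter (n m : ℕ) (f : Pt n → ℝ) : Pt n → ℝ := (lap n)^[m] f

/-- `∂_t f`, the partial derivative in the last (`t`) variable. -/
def dt (n : ℕ) (f : Pt n → ℝ) (X : Pt n) : ℝ :=
  fderiv ℝ f X ((0 : EuclideanSpace ℝ (Fin n)), (1:ℝ))

/-- The Neumann-type kernel `N_m(x,t) = γ(n,m) (|x|² + t²)^{-(n-2m+1)/2}`, with
`γ(n,m) = π^{(n+1)/2} Γ((n-2m+1)/2) / Γ(m)`. -/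
def Nker (n m : ℕ) (x : EuclideanSpace ℝ (Fin n)) (t : ℝ) : ℝ :=
  (Real.pi ^ (((n:ℝ) + 1)/2) * Real.Gamma (((n:ℝ) - 2*m + 1)/2) / Real.Gamma (m:ℝ)) *
    (‖x‖^2 + t^2) ^ (-(((n:ℝ) - 2*m + 1)/2))

/-- The convolution `(N_m * f)(x,t) = ∫_{ℝ^n} N_m(x-y, t) f(y) dy`. -/
def Nconv (n m : ℕ) (f : EuclideanSpace ℝ (Fin n) → ℝ) (X : Pt n) : ℝ :=
  ∫ y : EuclideanSpace ℝ (Fin n), Nker n m (X.1 - y) X.2 * f y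


/-!
Split a kernel `K` at height `M`. The part where `|K| ≤ M` contributes at most `M ‖f‖₁` to
`|K * f|` pointwise. If the superlevel sets obey `|{|K| > s}| ≤ B s^{-β}` with `β > 1`, the
layer-cake formula makes the part where `|K| > M` integrable, with integral `≲ B M^{1-β}`;
Tonelli then bounds its convolution with `|f|` in `L¹` by `B M^{1-β} ‖f‖₁`. Taking
`M = λ / (2‖f‖₁)` and applying Chebyshev's inequality gives
`|{|K * f| > λ}| ≲ B λ^{-β} ‖f‖₁^β`. For `N_m = γ ρ^{-(n-2m+1)/2}` with `ρ = |x|² + t²`, the set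
`{N_m > s}` in the upper half space lies in a half ball of radius `(γ/s)^{1/(n-2m+1)}`, so the
hypothesis holds with `β = (n+1)/(n-2m+1)`.
-/

open Set Metric Module

section LayerCake

variable {α : Type*} [MeasurableSpace α] {ρ : Measure α} {g : α → ℝ}

theorem setLIntegral_lt_le_of_meas_lt_le (hg : Measurable g) {B : ℝ≥0∞} {β M : ℝ}
    (hβ : 1 < β) (hM : 0 < M)
    (hB : ∀ s, 0 < s → ρ {x | s < g x} ≤ B * ENNReal.ofReal (s ^ (-β))) :
    ∫⁻ x in {x | M < g x}, ENNReal.ofReal (g x) ∂ρ ≤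
      B * ENNReal.ofReal (β / (β - 1) * M ^ (1 - β)) := by
  have hS : MeasurableSet {x | M < g x} := measurableSet_lt measurable_const hg
  have hnn : 0 ≤ᵐ[ρ.restrict {x | M < g x}] g :=
    (ae_restrict_mem hS).mono fun x hx => hM.le.trans (le_of_lt hx)
  rw [lintegral_eq_lintegral_meas_lt _ hnn hg.aemeasurable, ← Ioc_union_Ioi_eq_Ioi hM.le,
    lintegral_union measurableSet_Ioi Ioc_disjoint_Ioi_same]
  have hlow : ∫⁻ s in Ioc 0 M, ρ.restrict {x | M < g x} {x | s < g x} ≤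
      B * ENNReal.ofReal (M ^ (-β)) * ENNReal.ofReal M := by
    calc _ ≤ ∫⁻ _ in Ioc 0 M, B * ENNReal.ofReal (M ^ (-β)) := by
          refine setLIntegral_mono' measurableSet_Ioc fun s _ => ?_
          rw [Measure.restrict_apply' hS]
          exact (measure_mono inter_subset_right).trans (hB M hM)
      _ = _ := by rw [setLIntegral_const, Real.volume_Ioc, sub_zero]
  have hhigh : ∫⁻ s in Ioi M, ρ.restrict {x | M < g x} {x | s < g x} ≤
      B * ENNReal.ofReal (M ^ (1 - β) / (β - 1)) := by
    have hint : IntegrableOn (fun s : ℝ => s ^ (-β)) (Ioi M) :=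
      integrableOn_Ioi_rpow_of_lt (by linarith) hM
    calc _ ≤ ∫⁻ s in Ioi M, B * ENNReal.ofReal (s ^ (-β)) := by
          refine setLIntegral_mono' measurableSet_Ioi fun s hs => ?_
          rw [Measure.restrict_apply' hS]
          exact (measure_mono inter_subset_left).trans (hB s (hM.trans hs))
      _ = B * ENNReal.ofReal (∫ s in Ioi M, s ^ (-β)) := by
          rw [lintegral_const_mul _ (by fun_prop), ofReal_integral_eq_lintegral_ofReal
            hint ((ae_restrict_mem measurableSet_Ioi).mono fun s hs =>
              Real.rpow_nonneg (hM.trans hs).le _)]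
      _ = _ := by
          rw [integral_Ioi_rpow_of_lt (by linarith) hM, show -β + 1 = 1 - β by ring,
            neg_div, ← div_neg, neg_sub]
  have hM1 : M ^ (1 - β) = M ^ (-β) * M := by
    rw [sub_eq_neg_add, Real.rpow_add_one hM.ne']
  have hβ1 : 0 < β - 1 := by linarith
  calc _ ≤ B * ENNReal.ofReal (M ^ (-β)) * ENNReal.ofReal M +
        B * ENNReal.ofReal (M ^ (1 - β) / (β - 1)) := add_le_add hlow hhigh
    _ = _ := by
      rw [mul_assoc, ← mul_add, ← ENNReal.ofReal_mul (by positivity),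
        ← ENNReal.ofReal_add (by positivity) (by positivity), hM1]
      congr 2
      field_simp
      ring

end LayerCake

section KernelConvolution

variable {G T : Type*} [AddGroup G] [MeasurableSpace G] {μ : Measure G}

def kernelConv (μ : Measure G) (K : G → T → ℝ) (f : G → ℝ) (X : G × T) : ℝ :=
  ∫ y, K (X.1 - y) X.2 * f y ∂μ

def kernelConvTail (μ : Measure G) (K : G → T → ℝ) (f : G → ℝ) (M : ℝ) (X : G × T) : ℝ≥0∞ :=
  ∫⁻ y, {p : G × T | M < |K p.1 p.2|}.indicator (fun p => ‖K p.1 p.2‖ₑ) (X.1 - y, X.2) *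
    ‖f y‖ₑ ∂μ

theorem kernelConv_congr_ae (K : G → T → ℝ) {f g : G → ℝ} (hfg : f =ᵐ[μ] g) :
    kernelConv μ K f = kernelConv μ K g :=
  funext fun _ => integral_congr_ae (hfg.mono fun y hy => by simp only [hy])

theorem enorm_kernelConv_le (K : G → T → ℝ) {f : G → ℝ} (hf : AEMeasurable f μ) (M : ℝ)
    (X : G × T) :
    ‖kernelConv μ K f X‖ₑ ≤
      ENNReal.ofReal M * ∫⁻ y, ‖f y‖ₑ ∂μ + kernelConvTail μ K f M X := by
  have hsplit : ∀ p : G × T, ‖K p.1 p.2‖ₑ ≤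
      ENNReal.ofReal M + {p : G × T | M < |K p.1 p.2|}.indicator (fun p => ‖K p.1 p.2‖ₑ) p := by
    intro p
    by_cases hp : M < |K p.1 p.2|
    · simp [hp]
    · rw [indicator_of_notMem (s := {p : G × T | M < |K p.1 p.2|}) hp, add_zero,
        Real.enorm_eq_ofReal_abs]
      exact ENNReal.ofReal_le_ofReal (not_lt.mp hp)
  calc _ ≤ ∫⁻ y, ‖K (X.1 - y) X.2 * f y‖ₑ ∂μ := enorm_integral_le_lintegral_enorm _
    _ ≤ ∫⁻ y, ENNReal.ofReal M * ‖f y‖ₑ +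
        {p : G × T | M < |K p.1 p.2|}.indicator (fun p => ‖K p.1 p.2‖ₑ) (X.1 - y, X.2) *
          ‖f y‖ₑ ∂μ := by
        gcongr with y
        rw [enorm_mul, ← add_mul]
        gcongr
        exact hsplit (X.1 - y, X.2)
    _ = _ := by
        rw [lintegral_add_left' (hf.enorm.const_mul _),
          lintegral_const_mul' _ _ ENNReal.ofReal_ne_top]
        rfl

theorem setOf_lt_abs_kernelConv_subset (K : G → T → ℝ) {f : G → ℝ} (hf : AEMeasurable f μ)
    {lam M : ℝ} (hlam : 0 < lam)
    (hML : ENNReal.ofReal M * ∫⁻ y, ‖f y‖ₑ ∂μ = ENNReal.ofReal (lam / 2)) :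
    {X | lam < |kernelConv μ K f X|} ⊆
      {X | ENNReal.ofReal (lam / 2) ≤ kernelConvTail μ K f M X} := by
  intro X hX
  refine (ENNReal.add_le_add_iff_left (ENNReal.ofReal_ne_top (r := lam / 2))).1 ?_
  calc ENNReal.ofReal (lam / 2) + ENNReal.ofReal (lam / 2) = ENNReal.ofReal lam := by
        rw [← ENNReal.ofReal_add (by positivity) (by positivity), add_halves]
    _ ≤ ‖kernelConv μ K f X‖ₑ := by
        rw [Real.enorm_eq_ofReal_abs]
        exact ENNReal.ofReal_le_ofReal (le_of_lt hX)
    _ ≤ _ := hML ▸ enorm_kernelConv_le K hf M X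

variable [MeasurableSub₂ G] [MeasurableSpace T] [SFinite μ]

theorem measurable_kernelConvTail {K : G → T → ℝ} (hK : Measurable (Function.uncurry K))
    {f : G → ℝ} (hf : Measurable f) (M : ℝ) :
    Measurable (kernelConvTail μ K f M) := by
  have hKS : Measurable
      ({p : G × T | M < |K p.1 p.2|}.indicator fun p => ‖K p.1 p.2‖ₑ) :=
    hK.enorm.indicator (measurableSet_lt measurable_const hK.abs)
  exact ((hKS.comp ((measurable_fst.fst.sub measurable_snd).prodMk measurable_fst.snd)).mul
    (hf.enorm.comp measurable_snd)).lintegral_prod_right'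

variable [MeasurableAdd G] [μ.IsAddRightInvariant] {ν : Measure T} [SFinite ν]

theorem lintegral_lintegral_sub_mul {F : G × T → ℝ≥0∞} (hF : Measurable F) {w : G → ℝ≥0∞}
    (hw : AEMeasurable w μ) :
    ∫⁻ X, ∫⁻ y, F (X.1 - y, X.2) * w y ∂μ ∂(μ.prod ν) =
      (∫⁻ y, w y ∂μ) * ∫⁻ X, F X ∂(μ.prod ν) := by
  have hshift : Measurable fun q : (G × T) × G => (q.1.1 - q.2, q.1.2) := by fun_prop
  rw [lintegral_lintegral_swap ((hF.comp hshift).aemeasurable.mul hw.comp_snd),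
    ← lintegral_mul_const'' _ hw]
  refine lintegral_congr fun y => ?_
  have htranslate : ∫⁻ X, F (X.1 - y, X.2) ∂(μ.prod ν) = ∫⁻ X, F X ∂(μ.prod ν) :=
    ((measurePreserving_sub_right μ y).prod (MeasurePreserving.id ν)).lintegral_comp hF
  rw [lintegral_mul_const (f := fun X : G × T => F (X.1 - y, X.2)) _
    (hF.comp ((measurable_fst.sub_const y).prodMk measurable_snd)), htranslate, mul_comm]

theorem lintegral_kernelConvTail_le {K : G → T → ℝ} (hK : Measurable (Function.uncurry K))
    {B : ℝ≥0∞} {β M : ℝ} (hβ : 1 < β) (hM : 0 < M)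
    (hB : ∀ s, 0 < s → (μ.prod ν) {p | s < |K p.1 p.2|} ≤ B * ENNReal.ofReal (s ^ (-β)))
    {f : G → ℝ} (hf : Measurable f) :
    ∫⁻ X, kernelConvTail μ K f M X ∂(μ.prod ν) ≤
      (∫⁻ y, ‖f y‖ₑ ∂μ) * (B * ENNReal.ofReal (β / (β - 1) * M ^ (1 - β))) := by
  have hS : MeasurableSet {p : G × T | M < |K p.1 p.2|} :=
    measurableSet_lt measurable_const hK.abs
  have hKS : Measurable ({p : G × T | M < |K p.1 p.2|}.indicator fun p => ‖K p.1 p.2‖ₑ) :=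
    hK.enorm.indicator hS
  unfold kernelConvTail
  rw [lintegral_lintegral_sub_mul hKS hf.enorm.aemeasurable, lintegral_indicator hS]
  simp_rw [Real.enorm_eq_ofReal_abs]
  gcongr
  exact setLIntegral_lt_le_of_meas_lt_le hK.abs hβ hM hB

theorem meas_lt_abs_kernelConv_le {K : G → T → ℝ} (hK : Measurable (Function.uncurry K))
    {B : ℝ≥0∞} {β : ℝ} (hβ : 1 < β)
    (hB : ∀ s, 0 < s → (μ.prod ν) {p | s < |K p.1 p.2|} ≤ B * ENNReal.ofReal (s ^ (-β)))
    {f : G → ℝ} (hf : Integrable f μ) {lam : ℝ} (hlam : 0 < lam) :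
    (μ.prod ν) {X | lam < |kernelConv μ K f X|} ≤
      B * ENNReal.ofReal (β / (β - 1) * 2 ^ β * lam ^ (-β) * (∫ y, |f y| ∂μ) ^ β) := by
  wlog hfm : Measurable f generalizing f
  · obtain ⟨g, hgm, hfg⟩ := hf.aemeasurable
    have hL : ∫ y, |f y| ∂μ = ∫ y, |g y| ∂μ := integral_congr_ae (hfg.fun_comp abs)
    rw [kernelConv_congr_ae K hfg, hL]
    exact this (hf.congr hfg) hgm
  set L := ∫ y, |f y| ∂μ
  have hL : ∫⁻ y, ‖f y‖ₑ ∂μ = ENNReal.ofReal L :=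
    (ofReal_integral_norm_eq_lintegral_enorm hf).symm
  rcases (integral_nonneg fun y => abs_nonneg (f y) : 0 ≤ L).eq_or_lt with hL0 | (hLpos : 0 < L)
  · have hf0 : f =ᵐ[μ] 0 := by
      filter_upwards [(integral_eq_zero_iff_of_nonneg (fun y => abs_nonneg _) hf.abs).1 hL0.symm]
        with y hy
      simpa using hy
    rw [kernelConv_congr_ae K hf0]
    simp [kernelConv, not_lt.2 hlam.le]
  -- Below height `M` the kernel contributes at most `M * L = lam / 2` to `|K * f|`.
  set M := lam / (2 * L)
  have hM : 0 < M := by positivity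
  have hsub := setOf_lt_abs_kernelConv_subset K (hfm.aemeasurable (μ := μ)) hlam
    (show ENNReal.ofReal M * ∫⁻ y, ‖f y‖ₑ ∂μ = ENNReal.ofReal (lam / 2) by
      rw [hL, ← ENNReal.ofReal_mul hM.le]
      simp only [M]
      field_simp)
  have hconst : L * (β / (β - 1) * M ^ (1 - β)) / (lam / 2) =
      β / (β - 1) * 2 ^ β * lam ^ (-β) * L ^ β := by
    simp only [M]
    rw [show 1 - β = -β + 1 by ring, Real.rpow_add_one (by positivity),
      Real.div_rpow hlam.le (by positivity), Real.mul_rpow zero_le_two hLpos.le,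
      Real.rpow_neg zero_le_two, Real.rpow_neg hLpos.le]
    field_simp
  calc _ ≤ (μ.prod ν) {X | ENNReal.ofReal (lam / 2) ≤ kernelConvTail μ K f M X} :=
        measure_mono hsub
    _ ≤ (∫⁻ X, kernelConvTail μ K f M X ∂(μ.prod ν)) / ENNReal.ofReal (lam / 2) :=
        meas_ge_le_lintegral_div (measurable_kernelConvTail hK hfm M).aemeasurable
          (by simpa using hlam) ENNReal.ofReal_ne_top
    _ ≤ ENNReal.ofReal L * (B * ENNReal.ofReal (β / (β - 1) * M ^ (1 - β))) /
          ENNReal.ofReal (lam / 2) := by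
        rw [← hL]
        gcongr
        exact lintegral_kernelConvTail_le hK hβ hM hB hfm
    _ = _ := by
        rw [mul_left_comm, mul_div_assoc, ← ENNReal.ofReal_mul hLpos.le,
          ← ENNReal.ofReal_div_of_pos (by positivity), hconst]

end KernelConvolution

section HalfSpace

variable {E : Type*} [NormedAddCommGroup E] [NormedSpace ℝ E] [MeasurableSpace E] [BorelSpace E]
  [FiniteDimensional ℝ E] (μ : Measure E) [μ.IsAddHaarMeasure]

theorem prod_restrict_Ioi_norm_sq_add_sq_lt_le {R : ℝ} (hR : 0 < R) :
    (μ.prod (volume.restrict (Ioi 0))) {p : E × ℝ | ‖p.1‖ ^ 2 + p.2 ^ 2 < R ^ 2} ≤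
      ENNReal.ofReal (R ^ (finrank ℝ E + 1)) * μ (ball 0 1) := by
  calc _ ≤ (μ.prod (volume.restrict (Ioi 0))) (ball 0 R ×ˢ Iio R) := by
        refine measure_mono fun p hp => ⟨?_, ?_⟩
        · rw [mem_ball_zero_iff]
          exact lt_of_pow_lt_pow_left₀ 2 hR.le (by nlinarith [sq_nonneg p.2, hp.out])
        · exact lt_of_pow_lt_pow_left₀ 2 hR.le (by nlinarith [sq_nonneg ‖p.1‖, hp.out])
    _ = _ := by
        rw [Measure.prod_prod, Measure.restrict_apply measurableSet_Iio, Iio_inter_Ioi,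
          Real.volume_Ioo, sub_zero, Measure.addHaar_ball_of_pos μ _ hR, pow_succ,
          ENNReal.ofReal_mul (by positivity)]
        ring

theorem prod_restrict_Ioi_lt_mul_rpow_neg_le {c a s : ℝ} (hc : 0 < c) (ha : 0 < a) (hs : 0 < s) :
    (μ.prod (volume.restrict (Ioi 0))) {p : E × ℝ | s < c * (‖p.1‖ ^ 2 + p.2 ^ 2) ^ (-a)} ≤
      μ (ball 0 1) * ENNReal.ofReal (c ^ ((finrank ℝ E + 1) / (2 * a)) *
        s ^ (-((finrank ℝ E + 1) / (2 * a)))) := by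
  set R := (c / s) ^ (1 / (2 * a))
  have hR : 0 < R := by positivity
  have hR2 : (R ^ 2) ^ (-a) = s / c := by
    rw [← Real.rpow_natCast, ← Real.rpow_mul (by positivity), ← Real.rpow_mul (by positivity),
      show 1 / (2 * a) * (((2 : ℕ) : ℝ) * -a) = -1 by field_simp; norm_num, Real.rpow_neg_one,
      inv_div]
  have hsub : {p : E × ℝ | s < c * (‖p.1‖ ^ 2 + p.2 ^ 2) ^ (-a)} ⊆
      {p : E × ℝ | ‖p.1‖ ^ 2 + p.2 ^ 2 < R ^ 2} := by
    intro p hp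
    by_contra hle
    have hle : R ^ 2 ≤ ‖p.1‖ ^ 2 + p.2 ^ 2 := not_lt.mp hle
    have : c * (‖p.1‖ ^ 2 + p.2 ^ 2) ^ (-a) ≤ s := by
      calc _ ≤ c * (R ^ 2) ^ (-a) := mul_le_mul_of_nonneg_left
            (Real.rpow_le_rpow_of_nonpos (by positivity) hle (neg_nonpos.2 ha.le)) hc.le
        _ = s := by rw [hR2]; field_simp
    exact not_lt.mpr this hp
  refine (measure_mono hsub).trans ((prod_restrict_Ioi_norm_sq_add_sq_lt_le μ hR).trans_eq ?_)
  rw [mul_comm]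
  congr 2
  rw [← Real.rpow_natCast, ← Real.rpow_mul (by positivity), Real.div_rpow hc.le hs.le,
    Real.rpow_neg hs.le]
  push_cast
  ring_nf

end HalfSpace

theorem volume_setOf_snd_pos_and {E : Type*} [MeasureSpace E] [SFinite (volume : Measure E)]
    (P : E × ℝ → Prop) :
    volume {X : E × ℝ | 0 < X.2 ∧ P X} = (volume.prod (volume.restrict (Ioi 0))) {X | P X} := by
  have hH : (volume : Measure (E × ℝ)).restrict {X | 0 < X.2} =
      volume.prod (volume.restrict (Ioi 0)) := by
    rw [← Measure.restrict_univ (μ := (volume : Measure E)), Measure.prod_restrict, univ_prod,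
      ← Measure.volume_eq_prod]
    rfl
  rw [← hH, Measure.restrict_apply' (measurableSet_lt measurable_const measurable_snd)]
  congr 1
  ext X
  simp [and_comm]

section NeumannKernel

variable {n m : ℕ}

def neumannConst (n m : ℕ) : ℝ :=
  Real.pi ^ (((n:ℝ) + 1)/2) * Real.Gamma (((n:ℝ) - 2*m + 1)/2) / Real.Gamma (m:ℝ)

theorem neumannConst_pos (hm : 1 ≤ m) (hmn : 2 * m < n + 1) : 0 < neumannConst n m := by
  have hmn' : 2 * (m : ℝ) < n + 1 := by exact_mod_cast hmn
  have := Real.Gamma_pos_of_pos (by linarith : (0 : ℝ) < ((n:ℝ) - 2*m + 1)/2)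
  have := Real.Gamma_pos_of_pos (by exact_mod_cast hm : (0 : ℝ) < m)
  unfold neumannConst
  positivity

theorem measurable_uncurry_Nker : Measurable (Function.uncurry (Nker n m)) := by
  unfold Nker
  fun_prop

theorem prod_restrict_Ioi_lt_abs_Nker_le (hm : 1 ≤ m) (hmn : 2 * m < n + 1) {s : ℝ} (hs : 0 < s) :
    (volume.prod (volume.restrict (Ioi 0))) {p : Pt n | s < |Nker n m p.1 p.2|} ≤
      ENNReal.ofReal ((volume (ball (0 : EuclideanSpace ℝ (Fin n)) 1)).toReal *
        neumannConst n m ^ (((n:ℝ) + 1)/((n:ℝ) - 2*m + 1))) *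
      ENNReal.ofReal (s ^ (-(((n:ℝ) + 1)/((n:ℝ) - 2*m + 1)))) := by
  have hmn' : 2 * (m : ℝ) < n + 1 := by exact_mod_cast hmn
  have ha : 0 < ((n:ℝ) - 2*m + 1)/2 := by linarith
  have hγ := neumannConst_pos hm hmn
  have hdim : ((finrank ℝ (EuclideanSpace ℝ (Fin n)) : ℝ) + 1) / (2 * (((n:ℝ) - 2*m + 1)/2)) =
      ((n:ℝ) + 1)/((n:ℝ) - 2*m + 1) := by
    rw [finrank_euclideanSpace_fin]
    ring
  have habs : ∀ p : Pt n, |Nker n m p.1 p.2| =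
      neumannConst n m * (‖p.1‖ ^ 2 + p.2 ^ 2) ^ (-(((n:ℝ) - 2*m + 1)/2)) :=
    fun p => abs_of_nonneg (by unfold Nker; positivity)
  simp_rw [habs]
  refine (hdim ▸ prod_restrict_Ioi_lt_mul_rpow_neg_le volume hγ ha hs).trans_eq ?_
  rw [ENNReal.ofReal_mul ENNReal.toReal_nonneg, ENNReal.ofReal_toReal measure_ball_lt_top.ne,
    mul_assoc, ← ENNReal.ofReal_mul (by positivity)]

end NeumannKernel

theorem statement6 (n m : ℕ) (hm : 2 ≤ 2*m) (hmn : 2*m < n + 1) :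
    ∃ C : ℝ, 0 < C ∧
      ∀ f : EuclideanSpace ℝ (Fin n) → ℝ, Integrable f →
        ∀ lam : ℝ, 0 < lam →
          volume {X : Pt n | 0 < X.2 ∧ lam < |Nconv n m f X|} ≤
            ENNReal.ofReal
              (C * lam ^ (-(((n:ℝ) + 1)/((n:ℝ) - 2*m + 1))) *
                (∫ y, |f y|) ^ (((n:ℝ) + 1)/((n:ℝ) - 2*m + 1))) := by
  have hm1 : 1 ≤ m := by omega
  set β : ℝ := ((n:ℝ) + 1)/((n:ℝ) - 2*m + 1)
  have hβ : 1 < β := by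
    have hmn' : 2 * (m : ℝ) < n + 1 := by exact_mod_cast hmn
    have hm1' : (1 : ℝ) ≤ m := by exact_mod_cast hm1
    rw [one_lt_div (by linarith)]
    linarith
  set ω := (volume (ball (0 : EuclideanSpace ℝ (Fin n)) 1)).toReal
  have hω : 0 < ω := ENNReal.toReal_pos (measure_ball_pos _ _ one_pos).ne' measure_ball_lt_top.ne
  have hγ := neumannConst_pos hm1 hmn
  refine ⟨ω * neumannConst n m ^ β * (β / (β - 1) * 2 ^ β), by positivity,
    fun f hf lam hlam => ?_⟩
  rw [volume_setOf_snd_pos_and]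
  refine (meas_lt_abs_kernelConv_le measurable_uncurry_Nker hβ
    (fun s hs => prod_restrict_Ioi_lt_abs_Nker_le hm1 hmn hs) hf hlam).trans_eq ?_
  rw [← ENNReal.ofReal_mul (by positivity)]
  congr 1
  ring
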